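/- Under the hypotheses of the previous statement, but with $a\in (W^{2,\infty}(\Omega))^{n\times n}$ and $u_0\in W^{3,\infty}(\Omega)$: there exist constants $C>0$ and $s_2>0$ such that for all $s\ge s_2$ and all $g\in H_0^2(\Omega)$, $s^2\int_\Omega(|g|^2+|\nabla g|^2)e^{2s\varphi_0}\,dx \le C\int_\Omega(|\mathcal{L}_0 g|^2+|\nabla(\mathcal{L}_0 g)|^2)e^{2s\varphi_0}\,dx$. -/

import Mathlib

/-!
Zeroth order: conjugate by the weight. With `w = g e^{sφ}`,
`e^{sφ} div(g B) = (B · ∇w + (div B) w) - s (B · ∇φ) w`. In the square of the right-hand side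
the cross term integrates by parts to `O(s ∫ w²)`, while the last term alone gives
`s² ∫ (B · ∇φ)² w² ≥ s² μ² ∫ w²`; for `φ = e^{λd}` non-degeneracy holds with `μ = λ κ₂`,
since `B · ∇φ = λ φ (B · ∇d)` and `φ ≥ 1`.

First order: apply the zeroth-order estimate to `g` and to every `∂ₖ g`. The commutator
`∂ₖ div(g B) - div((∂ₖ g) B)` only involves `g`, `∇g` and derivatives of `B` up to order two,
so it costs `O(∫ (g² + |∇g|²) e^{2sφ})`, which `s²` absorbs once `s` is large.
-/

open MeasureTheory Real

/-- The `i`-th partial derivative of `f` at `x`. -/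
noncomputable def pd {n : ℕ} (f : EuclideanSpace ℝ (Fin n) → ℝ) (i : Fin n)
    (x : EuclideanSpace ℝ (Fin n)) : ℝ :=
  fderiv ℝ f x (EuclideanSpace.single i 1)

/-- The first-order transport operator `L₀ g = div(g a ∇u₀)`. -/
noncomputable def L0op {n : ℕ}
    (a : EuclideanSpace ℝ (Fin n) → Fin n → Fin n → ℝ)
    (u0 g : EuclideanSpace ℝ (Fin n) → ℝ) (x : EuclideanSpace ℝ (Fin n)) : ℝ :=
  ∑ i, pd (fun y => g y * ∑ j, a y i j * pd u0 j y) i x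

open Finset

variable {n : ℕ}

local notation "E" => EuclideanSpace ℝ (Fin n)

lemma pd_contDiff {k m : WithTop ℕ∞} {f : E → ℝ} (hf : ContDiff ℝ k f) (hm : m + 1 ≤ k)
    (i : Fin n) : ContDiff ℝ m (pd f i) :=
  (ContinuousLinearMap.apply ℝ ℝ (EuclideanSpace.single i (1 : ℝ))).contDiff.comp
    (hf.fderiv_right hm)

lemma pd_continuous {f : E → ℝ} (hf : ContDiff ℝ 1 f) (i : Fin n) : Continuous (pd f i) :=
  (pd_contDiff (m := 0) hf le_rfl i).continuous

lemma pd_add {f g : E → ℝ} {x : E} (hf : DifferentiableAt ℝ f x)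
    (hg : DifferentiableAt ℝ g x) (i : Fin n) :
    pd (fun y => f y + g y) i x = pd f i x + pd g i x := by
  simp only [pd, fderiv_fun_add hf hg, add_apply]

lemma pd_mul {f g : E → ℝ} {x : E} (hf : DifferentiableAt ℝ f x)
    (hg : DifferentiableAt ℝ g x) (i : Fin n) :
    pd (fun y => f y * g y) i x = pd f i x * g x + f x * pd g i x := by
  simp only [pd, fderiv_fun_mul hf hg, add_apply, smul_apply, smul_eq_mul]
  ring

lemma pd_sum {ι : Type*} (s : Finset ι) {f : ι → E → ℝ} {x : E}
    (hf : ∀ j ∈ s, DifferentiableAt ℝ (f j) x) (i : Fin n) :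
    pd (fun y => ∑ j ∈ s, f j y) i x = ∑ j ∈ s, pd (f j) i x := by
  simp only [pd, fderiv_fun_sum hf, _root_.sum_apply]

lemma pd_exp_const_mul {f : E → ℝ} {x : E} (hf : DifferentiableAt ℝ f x) (c : ℝ) (i : Fin n) :
    pd (fun y => exp (c * f y)) i x = exp (c * f x) * (c * pd f i x) := by
  simp only [pd, fderiv_exp (hf.const_mul c), fderiv_const_mul hf, smul_apply, smul_eq_mul]

lemma pd_comm {f : E → ℝ} (hf : ContDiff ℝ 2 f) (i k : Fin n) (x : E) :
    pd (pd f i) k x = pd (pd f k) i x := by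
  have hf' : HasFDerivAt (fderiv ℝ f) (fderiv ℝ (fderiv ℝ f) x) x :=
    ((hf.fderiv_right (m := 1) le_rfl).differentiable one_ne_zero x).hasFDerivAt
  have hpd (v : E) (j : Fin n) :
      pd (fun y => fderiv ℝ f y v) j x =
        fderiv ℝ (fderiv ℝ f) x (EuclideanSpace.single j 1) v := by
    have hv : HasFDerivAt (fun y => fderiv ℝ f y v)
        ((ContinuousLinearMap.apply ℝ ℝ v).comp (fderiv ℝ (fderiv ℝ f) x)) x :=
      (ContinuousLinearMap.apply ℝ ℝ v).hasFDerivAt.comp x hf'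
    simp [pd, hv.fderiv]
  change pd (fun y => fderiv ℝ f y _) k x = pd (fun y => fderiv ℝ f y _) i x
  rw [hpd, hpd, second_derivative_symmetric
    (fun y => ((hf.differentiable two_ne_zero) y).hasFDerivAt) hf']

lemma support_pd_subset (f : E → ℝ) (i : Fin n) : Function.support (pd f i) ⊆ tsupport f :=
  fun x hx => support_fderiv_subset ℝ fun h => hx (by simp [pd, h])

lemma tsupport_pd_subset (f : E → ℝ) (i : Fin n) : tsupport (pd f i) ⊆ tsupport f :=
  closure_minimal (support_pd_subset f i) isClosed_closure

lemma HasCompactSupport.pd {f : E → ℝ} (hf : HasCompactSupport f) (i : Fin n) :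
    HasCompactSupport (pd f i) :=
  hf.mono' (support_pd_subset f i)

noncomputable def divergence (V : E → Fin n → ℝ) (x : E) : ℝ :=
  ∑ i, pd (fun y => V y i) i x

lemma divergence_contDiff {k m : WithTop ℕ∞} {V : E → Fin n → ℝ}
    (hV : ∀ i, ContDiff ℝ k fun x => V x i) (hm : m + 1 ≤ k) : ContDiff ℝ m (divergence V) :=
  ContDiff.sum fun i _ => pd_contDiff (hV i) hm i

lemma divergence_continuous {V : E → Fin n → ℝ} (hV : ∀ i, ContDiff ℝ 1 fun x => V x i) :
    Continuous (divergence V) :=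
  (divergence_contDiff (m := 0) hV le_rfl).continuous

section Integration

variable {Ω : Set (EuclideanSpace ℝ (Fin n))}

lemma Continuous.integrableOn_of_isBounded {f : E → ℝ} (hf : Continuous f)
    (hΩ : Bornology.IsBounded Ω) : IntegrableOn f Ω :=
  (hf.locallyIntegrable.integrableOn_isCompact hΩ.isCompact_closure).mono_set subset_closure

lemma integral_mul_pd_add_pd_mul {f q : E → ℝ} (hf : ContDiff ℝ 1 f) (hq : ContDiff ℝ 1 q)
    (hqc : HasCompactSupport q) (i : Fin n) :
    ∫ x, (f x * pd q i x + pd f i x * q x) = 0 := by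
  have hfq' : Integrable fun x => f x * pd q i x :=
    (hf.continuous.mul (pd_continuous hq i)).integrable_of_hasCompactSupport (hqc.pd i).mul_left
  have hf'q : Integrable fun x => pd f i x * q x :=
    ((pd_continuous hf i).mul hq.continuous).integrable_of_hasCompactSupport hqc.mul_left
  have hibp : ∫ x, f x * pd q i x = -∫ x, pd f i x * q x :=
    integral_mul_fderiv_eq_neg_fderiv_mul_of_integrable hf'q hfq'
      ((hf.continuous.mul hq.continuous).integrable_of_hasCompactSupport hqc.mul_left)
      (fun x _ => hf.differentiable one_ne_zero x) (fun x _ => hq.differentiable one_ne_zero x)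
  rw [integral_add hfq' hf'q, hibp, neg_add_cancel]

lemma setIntegral_transport_mul_self {V : E → Fin n → ℝ}
    (hV : ∀ i, ContDiff ℝ 1 fun x => V x i) {w : E → ℝ} (hw : ContDiff ℝ 1 w)
    (hwc : HasCompactSupport w) (hwΩ : tsupport w ⊆ Ω) :
    ∫ x in Ω, ((∑ i, V x i * pd w i x) * w x + divergence V x * w x ^ 2 / 2) = 0 := by
  have hw' := hw.differentiable one_ne_zero
  have hterm (i : Fin n) :
      ∫ x, (V x i * pd w i x * w x + pd (fun y => V y i) i x * w x ^ 2 / 2) = 0 := by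
    have hpd (x : E) : pd (fun y => w y * w y) i x = 2 * (pd w i x * w x) := by
      rw [pd_mul (hw' x) (hw' x)]; ring
    have hibp := integral_mul_pd_add_pd_mul (hV i) (hw.mul hw) hwc.mul_left i
    simp only [hpd] at hibp
    calc _ = ∫ x, 1 / 2 *
          (V x i * (2 * (pd w i x * w x)) + pd (fun x => V x i) i x * (w x * w x)) := by
          congr 1 with x; ring
      _ = 0 := by rw [integral_const_mul, hibp, mul_zero]
  have hint (i : Fin n) :
      Integrable fun x => V x i * pd w i x * w x + pd (fun y => V y i) i x * w x ^ 2 / 2 :=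
    (((hV i).continuous.mul (pd_continuous hw i)).mul hw.continuous |>.add
      (((pd_continuous (hV i) i).mul (hw.continuous.pow 2)).div_const 2)
      ).integrable_of_hasCompactSupport (hwc.mono' fun x hx => by
        by_contra h
        exact hx (by simp [image_eq_zero_of_notMem_tsupport h]))
  rw [setIntegral_eq_integral_of_forall_compl_eq_zero fun x hx => by
    simp [image_eq_zero_of_notMem_tsupport fun h => hx (hwΩ h)]]
  simp only [divergence, Finset.sum_mul, Finset.sum_div, ← Finset.sum_add_distrib]
  rw [integral_finsetSum _ fun i _ => hint i]
  exact Finset.sum_eq_zero fun i _ => hterm i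

end Integration

lemma exp_mul_divergence_mul {g φ : E → ℝ} {B : E → Fin n → ℝ} {x : E}
    (hg : DifferentiableAt ℝ g x) (hφ : DifferentiableAt ℝ φ x)
    (hB : ∀ i, DifferentiableAt ℝ (fun y => B y i) x) (s : ℝ) :
    exp (s * φ x) * divergence (fun y i => g y * B y i) x =
      ∑ i, B x i * pd (fun y => g y * exp (s * φ y)) i x
        + divergence B x * (g x * exp (s * φ x))
        - s * (∑ i, B x i * pd φ i x) * (g x * exp (s * φ x)) := by
  simp only [divergence, pd_mul hg (hB _), pd_mul hg (hφ.const_mul s).exp, pd_exp_const_mul hφ,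
    Finset.mul_sum, Finset.sum_mul, ← Finset.sum_add_distrib, ← Finset.sum_sub_distrib]
  refine Finset.sum_congr rfl fun i _ => ?_
  ring

lemma carleman_pointwise_bound {A b w γ D s μ K : ℝ} (hs : 0 ≤ s) (hμγ : μ ^ 2 ≤ γ ^ 2)
    (hK : γ * b - D / 2 ≤ K) :
    (s ^ 2 * μ ^ 2 - 2 * s * K) * w ^ 2 - 2 * s * (γ * A * w + D * w ^ 2 / 2) ≤
      (A + b * w - s * γ * w) ^ 2 := by
  nlinarith [sq_nonneg (A + b * w), mul_nonneg (mul_nonneg (sq_nonneg s) (sub_nonneg.2 hμγ))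
    (sq_nonneg w), mul_nonneg (mul_nonneg hs (sub_nonneg.2 hK)) (sq_nonneg w)]

section Carleman

variable {Ω : Set (EuclideanSpace ℝ (Fin n))} {B : EuclideanSpace ℝ (Fin n) → Fin n → ℝ}
  {φ : EuclideanSpace ℝ (Fin n) → ℝ}

lemma carleman_divergence_lower_bound (hΩo : IsOpen Ω) (hΩb : Bornology.IsBounded Ω)
    (hB : ∀ i, ContDiff ℝ 1 fun x => B x i) (hφ : ContDiff ℝ 2 φ) {μ : ℝ} (hμ : 0 ≤ μ)
    (hnondeg : ∀ᵐ x ∂(volume.restrict Ω), μ ≤ |∑ i, B x i * pd φ i x|) {K s : ℝ} (hs : 0 ≤ s)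
    (hK : ∀ x ∈ Ω, (∑ i, B x i * pd φ i x) * divergence B x -
      divergence (fun y i => (∑ j, B y j * pd φ j y) * B y i) x / 2 ≤ K)
    {g : E → ℝ} (hg : ContDiff ℝ 1 g) (hgc : HasCompactSupport g) (hgΩ : tsupport g ⊆ Ω) :
    (s ^ 2 * μ ^ 2 - 2 * s * K) * ∫ x in Ω, g x ^ 2 * exp (2 * s * φ x) ≤
      ∫ x in Ω, divergence (fun y i => g y * B y i) x ^ 2 * exp (2 * s * φ x) := by
  set γ : E → ℝ := fun x => ∑ i, B x i * pd φ i x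
  have hγ : ContDiff ℝ 1 γ := ContDiff.sum fun i _ => (hB i).mul (pd_contDiff hφ le_rfl i)
  set V : E → Fin n → ℝ := fun x i => γ x * B x i
  have hV (i : Fin n) : ContDiff ℝ 1 fun x => V x i := hγ.mul (hB i)
  have hφ1 : ContDiff ℝ 1 φ := hφ.of_le one_le_two
  set w : E → ℝ := fun y => g y * exp (s * φ y)
  have hw : ContDiff ℝ 1 w := hg.mul (contDiff_const.mul hφ1).exp
  set J : E → ℝ := fun x => (∑ i, V x i * pd w i x) * w x + divergence V x * w x ^ 2 / 2
  have hJ : ∫ x in Ω, J x = 0 :=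
    setIntegral_transport_mul_self hV hw hgc.mul_right (tsupport_mul_subset_left.trans hgΩ)
  have hpt : ∀ᵐ x ∂(volume.restrict Ω), (s ^ 2 * μ ^ 2 - 2 * s * K) * w x ^ 2 - 2 * s * J x ≤
      divergence (fun y i => g y * B y i) x ^ 2 * exp (2 * s * φ x) := by
    filter_upwards [hnondeg, ae_restrict_mem hΩo.measurableSet] with x hμx hx
    have hconj : exp (s * φ x) * divergence (fun y i => g y * B y i) x =
        ∑ i, B x i * pd w i x + divergence B x * w x - s * γ x * w x :=
      exp_mul_divergence_mul (hg.differentiable one_ne_zero x)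
        (hφ1.differentiable one_ne_zero x) (fun i => (hB i).differentiable one_ne_zero x) s
    have hsq : divergence (fun y i => g y * B y i) x ^ 2 * exp (2 * s * φ x) =
        (∑ i, B x i * pd w i x + divergence B x * w x - s * γ x * w x) ^ 2 := by
      rw [← hconj, show 2 * s * φ x = s * φ x + s * φ x by ring, exp_add]
      ring
    have hVγ : ∑ i, V x i * pd w i x = γ x * ∑ i, B x i * pd w i x := by
      simp only [V, Finset.mul_sum, mul_assoc]
    rw [hsq]
    simp only [J, hVγ]
    exact carleman_pointwise_bound hs (by simpa using pow_le_pow_left₀ hμ hμx 2) (hK x hx)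
  have hwc : Continuous w := hw.continuous
  have hJc : Continuous J :=
    ((continuous_finsetSum _ fun i _ => (hV i).continuous.mul (pd_continuous hw i)).mul
      hwc).add (((divergence_continuous hV).mul (hwc.pow 2)).div_const 2)
  have hPc : Continuous (divergence fun y i => g y * B y i) :=
    divergence_continuous fun i => hg.mul (hB i)
  have hφc : Continuous φ := hφ.continuous
  have hw2 : ∫ x in Ω, g x ^ 2 * exp (2 * s * φ x) = ∫ x in Ω, w x ^ 2 := by
    congr 1 with x
    rw [mul_pow, show 2 * s * φ x = s * φ x + s * φ x by ring, exp_add, sq (exp _)]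
  calc _ = ∫ x in Ω, ((s ^ 2 * μ ^ 2 - 2 * s * K) * w x ^ 2 - 2 * s * J x) := by
        rw [hw2, integral_sub, integral_const_mul, integral_const_mul, hJ, mul_zero, sub_zero]
        all_goals exact Continuous.integrableOn_of_isBounded (by fun_prop) hΩb
    _ ≤ _ := integral_mono_ae (Continuous.integrableOn_of_isBounded (by fun_prop) hΩb)
        (Continuous.integrableOn_of_isBounded (by fun_prop) hΩb) hpt

theorem carleman_divergence_zeroth_order (hΩo : IsOpen Ω) (hΩb : Bornology.IsBounded Ω)
    (hB : ∀ i, ContDiff ℝ 1 fun x => B x i) (hφ : ContDiff ℝ 2 φ) {μ : ℝ} (hμ : 0 < μ)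
    (hnondeg : ∀ᵐ x ∂(volume.restrict Ω), μ ≤ |∑ i, B x i * pd φ i x|) :
    ∃ s0 > 0, ∀ s ≥ s0, ∀ g : E → ℝ,
      ContDiff ℝ 1 g → HasCompactSupport g → tsupport g ⊆ Ω →
      s ^ 2 * ∫ x in Ω, g x ^ 2 * exp (2 * s * φ x) ≤
        2 / μ ^ 2 * ∫ x in Ω, divergence (fun y i => g y * B y i) x ^ 2 * exp (2 * s * φ x) := by
  have hγ : ContDiff ℝ 1 fun x => ∑ i, B x i * pd φ i x :=
    ContDiff.sum fun i _ => (hB i).mul (pd_contDiff hφ le_rfl i)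
  obtain ⟨K, hK⟩ := hΩb.isCompact_closure.exists_bound_of_continuousOn
    ((hγ.continuous.mul (divergence_continuous hB)).sub
      ((divergence_continuous fun i => hγ.mul (hB i)).div_const 2)).continuousOn
  refine ⟨(4 * |K| + 1) / μ ^ 2, by positivity, fun s hs g hg hgc hgΩ => ?_⟩
  have hs0 : 0 ≤ s := le_trans (by positivity) hs
  have hsμ : 4 * |K| + 1 ≤ s * μ ^ 2 := by rwa [ge_iff_le, div_le_iff₀ (by positivity)] at hs
  have hlow := carleman_divergence_lower_bound hΩo hΩb hB hφ hμ.le hnondeg hs0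
    (fun x hx => (le_abs_self _).trans ((hK x (subset_closure hx)).trans (le_abs_self K)))
    hg hgc hgΩ
  have hI : 0 ≤ ∫ x in Ω, g x ^ 2 * exp (2 * s * φ x) :=
    setIntegral_nonneg hΩo.measurableSet fun x _ => by positivity
  refine le_trans ?_ (mul_le_mul_of_nonneg_left hlow (by positivity))
  rw [div_mul_eq_mul_div, le_div_iff₀ (by positivity)]
  nlinarith [mul_nonneg (mul_nonneg hs0 hI) (by linarith : 0 ≤ s * μ ^ 2 - 4 * |K|)]

end Carleman

lemma pd_divergence_mul {g : E → ℝ} {B : E → Fin n → ℝ} (hg : ContDiff ℝ 2 g)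
    (hB : ∀ i, ContDiff ℝ 2 fun x => B x i) (k : Fin n) (x : E) :
    pd (divergence fun y i => g y * B y i) k x =
      divergence (fun y i => pd g k y * B y i) x +
        ∑ i, (pd g i x * pd (fun y => B y i) k x + g x * pd (pd (fun y => B y i) k) i x) := by
  have hg1 := hg.differentiable two_ne_zero
  have hpdg := fun j => (pd_contDiff (m := 1) hg le_rfl j).differentiable one_ne_zero
  have hB1 := fun i => (hB i).differentiable two_ne_zero
  have hpdB := fun i j => (pd_contDiff (m := 1) (hB i) le_rfl j).differentiable one_ne_zero
  change pd (fun y => ∑ i, pd (fun z => g z * B z i) i y) k x = _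
  rw [pd_sum _ fun i _ =>
    (pd_contDiff (m := 1) (hg.mul (hB i)) le_rfl i).differentiable one_ne_zero x]
  simp only [divergence, ← Finset.sum_add_distrib]
  refine Finset.sum_congr rfl fun i _ => ?_
  have hpdk : pd (fun y => g y * B y i) k =
      fun y => pd g k y * B y i + g y * pd (fun y => B y i) k y :=
    funext fun y => pd_mul (hg1 y) (hB1 i y) k
  rw [pd_comm (hg.mul (hB i)), hpdk,
    pd_add (f := fun y => pd g k y * B y i) (g := fun y => g y * pd (fun y => B y i) k y)
      ((hpdg k x).mul (hB1 i x)) ((hg1 x).mul (hpdB i k x)),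
    pd_mul (hg1 x) (hpdB i k x)]

lemma sq_sum_mul_add_mul_le {ι : Type*} (s : Finset ι) (u b c : ι → ℝ) (v : ℝ) :
    (∑ i ∈ s, (u i * b i + v * c i)) ^ 2 ≤
      2 * (#s + 1) * (∑ i ∈ s, (b i ^ 2 + c i ^ 2)) * (v ^ 2 + ∑ i ∈ s, u i ^ 2) := by
  have hu : 0 ≤ ∑ i ∈ s, u i ^ 2 := Finset.sum_nonneg fun i _ => sq_nonneg _
  have hb : 0 ≤ ∑ i ∈ s, b i ^ 2 := Finset.sum_nonneg fun i _ => sq_nonneg _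
  have hc : 0 ≤ ∑ i ∈ s, c i ^ 2 := Finset.sum_nonneg fun i _ => sq_nonneg _
  have hs : (0 : ℝ) ≤ #s := Nat.cast_nonneg _
  rw [Finset.sum_add_distrib, Finset.sum_add_distrib, ← Finset.mul_sum]
  calc (∑ i ∈ s, u i * b i + v * ∑ i ∈ s, c i) ^ 2
      ≤ 2 * (∑ i ∈ s, u i * b i) ^ 2 + 2 * (v ^ 2 * (∑ i ∈ s, c i) ^ 2) := by
        nlinarith [sq_nonneg (∑ i ∈ s, u i * b i - v * ∑ i ∈ s, c i)]
    _ ≤ 2 * ((∑ i ∈ s, u i ^ 2) * ∑ i ∈ s, b i ^ 2) +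
          2 * (v ^ 2 * (#s * ∑ i ∈ s, c i ^ 2)) := by
        gcongr
        · exact Finset.sum_mul_sq_le_sq_mul_sq s u b
        · exact sq_sum_le_card_mul_sum_sq
    _ ≤ _ := by
        nlinarith [mul_nonneg (mul_nonneg hs hu) hb, mul_nonneg (mul_nonneg hs hu) hc,
          mul_nonneg (mul_nonneg hs (sq_nonneg v)) hb, mul_nonneg (sq_nonneg v) hb,
          mul_nonneg (sq_nonneg v) hc, mul_nonneg hu hc]

lemma le_abs_sum_mul_pd_exp_mul {B : E → Fin n → ℝ} {d : E → ℝ} {x : E}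
    (hd : DifferentiableAt ℝ d x) (hdx : 0 ≤ d x) {lam κ : ℝ} (hlam : 0 ≤ lam)
    (hκ : κ ≤ |∑ i, B x i * pd d i x|) :
    lam * κ ≤ |∑ i, B x i * pd (fun y => exp (lam * d y)) i x| := by
  have hsum : ∑ i, B x i * pd (fun y => exp (lam * d y)) i x =
      lam * exp (lam * d x) * ∑ i, B x i * pd d i x := by
    simp only [pd_exp_const_mul hd, Finset.mul_sum]
    exact Finset.sum_congr rfl fun i _ => by ring
  have hexp : 1 ≤ exp (lam * d x) := one_le_exp (mul_nonneg hlam hdx)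
  rw [hsum, abs_mul, abs_mul, abs_of_nonneg hlam, abs_of_pos (exp_pos _)]
  nlinarith [mul_le_mul_of_nonneg_left hκ hlam,
    mul_nonneg (mul_nonneg hlam (abs_nonneg (∑ i, B x i * pd d i x))) (sub_nonneg.2 hexp)]

section FirstOrder

variable {Ω : Set (EuclideanSpace ℝ (Fin n))} {B : EuclideanSpace ℝ (Fin n) → Fin n → ℝ}

lemma exists_commutator_bound (hΩb : Bornology.IsBounded Ω)
    (hB : ∀ i, ContDiff ℝ 2 fun x => B x i) :
    ∃ C, ∀ g : E → ℝ, ContDiff ℝ 2 g → ∀ x ∈ Ω,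
      ∑ k, (pd (divergence fun y i => g y * B y i) k x -
        divergence (fun y i => pd g k y * B y i) x) ^ 2 ≤ C * (g x ^ 2 + ∑ i, pd g i x ^ 2) := by
  set G : E → ℝ := fun x =>
    ∑ k, ∑ i, (pd (fun y => B y i) k x ^ 2 + pd (pd (fun y => B y i) k) i x ^ 2)
  have hG : Continuous G := continuous_finsetSum _ fun k _ => continuous_finsetSum _ fun i _ =>
    ((pd_continuous ((hB i).of_le one_le_two) k).pow 2).add
      ((pd_continuous (pd_contDiff (hB i) le_rfl k) i).pow 2)
  obtain ⟨D, hD⟩ := hΩb.isCompact_closure.exists_bound_of_continuousOn hG.continuousOn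
  refine ⟨2 * (n + 1) * D, fun g hg x hx => ?_⟩
  have hGx : G x ≤ D := (le_abs_self _).trans (hD x (subset_closure hx))
  calc _ ≤ ∑ k, 2 * (n + 1) *
        (∑ i, (pd (fun y => B y i) k x ^ 2 + pd (pd (fun y => B y i) k) i x ^ 2)) *
          (g x ^ 2 + ∑ i, pd g i x ^ 2) := by
        gcongr with k
        rw [pd_divergence_mul hg hB, add_sub_cancel_left]
        simpa using sq_sum_mul_add_mul_le univ (fun i => pd g i x) _ _ (g x)
    _ = 2 * (n + 1) * G x * (g x ^ 2 + ∑ i, pd g i x ^ 2) := by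
        simp only [G, Finset.mul_sum, Finset.sum_mul]
    _ ≤ _ := by gcongr

/-- The absorption step, with `u = g`, `U = ∇g`, `P = div(g B)`, `T k = div((∂ₖ g) B)` and
`Q = ∇P` in mind. -/
lemma weighted_estimate_of_commutator_bound (hΩo : IsOpen Ω) (hΩb : Bornology.IsBounded Ω)
    {ρ u P : E → ℝ} {U T Q : Fin n → E → ℝ} (hρ : Continuous ρ) (hρ0 : ∀ x, 0 ≤ ρ x)
    (hu : Continuous u) (hP : Continuous P) (hU : ∀ k, Continuous (U k))
    (hT : ∀ k, Continuous (T k)) (hQ : ∀ k, Continuous (Q k))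
    {s A C : ℝ} (hA : 0 ≤ A) (hs : 4 * A * C ≤ s ^ 2)
    (hu_le : s ^ 2 * ∫ x in Ω, u x ^ 2 * ρ x ≤ A * ∫ x in Ω, P x ^ 2 * ρ x)
    (hU_le : ∀ k, s ^ 2 * ∫ x in Ω, U k x ^ 2 * ρ x ≤ A * ∫ x in Ω, T k x ^ 2 * ρ x)
    (hcomm : ∀ x ∈ Ω, ∑ k, (Q k x - T k x) ^ 2 ≤ C * (u x ^ 2 + ∑ k, U k x ^ 2)) :
    s ^ 2 * ∫ x in Ω, (u x ^ 2 + ∑ k, U k x ^ 2) * ρ x ≤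
      4 * A * ∫ x in Ω, (P x ^ 2 + ∑ k, Q k x ^ 2) * ρ x := by
  have hint {f : E → ℝ} (hf : Continuous f) : IntegrableOn (fun x => f x * ρ x) Ω :=
    (hf.mul hρ).integrableOn_of_isBounded hΩb
  have hsplit {f : E → ℝ} {F : Fin n → E → ℝ} (hf : Continuous f)
      (hF : ∀ k, Continuous (F k)) :
      ∫ x in Ω, (f x + ∑ k, F k x) * ρ x =
        (∫ x in Ω, f x * ρ x) + ∑ k, ∫ x in Ω, F k x * ρ x := by
    simp only [add_mul, Finset.sum_mul]
    rw [integral_add (hint hf) (integrable_finsetSum _ fun k _ => hint (hF k)),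
      integral_finsetSum _ fun k _ => hint (hF k)]
  have hzero : s ^ 2 * ∫ x in Ω, (u x ^ 2 + ∑ k, U k x ^ 2) * ρ x ≤
      A * ∫ x in Ω, (P x ^ 2 + ∑ k, T k x ^ 2) * ρ x := by
    rw [hsplit (by fun_prop) fun k => by fun_prop, hsplit (by fun_prop) fun k => by fun_prop,
      mul_add, mul_add, Finset.mul_sum, Finset.mul_sum]
    exact add_le_add hu_le (Finset.sum_le_sum fun k _ => hU_le k)
  have hcommutator : ∫ x in Ω, (P x ^ 2 + ∑ k, T k x ^ 2) * ρ x ≤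
      2 * (∫ x in Ω, (P x ^ 2 + ∑ k, Q k x ^ 2) * ρ x) +
        2 * C * ∫ x in Ω, (u x ^ 2 + ∑ k, U k x ^ 2) * ρ x := by
    calc _ ≤ ∫ x in Ω,
          (2 * (P x ^ 2 + ∑ k, Q k x ^ 2) + 2 * C * (u x ^ 2 + ∑ k, U k x ^ 2)) * ρ x :=
          setIntegral_mono_on (hint (by fun_prop)) (hint (by fun_prop)) hΩo.measurableSet
            fun x hx => mul_le_mul_of_nonneg_right ?_ (hρ0 x)
      _ = _ := by
          rw [← integral_const_mul, ← integral_const_mul, ← integral_add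
            ((hint (f := fun x => P x ^ 2 + ∑ k, Q k x ^ 2) (by fun_prop)).const_mul 2)
            ((hint (f := fun x => u x ^ 2 + ∑ k, U k x ^ 2) (by fun_prop)).const_mul (2 * C))]
          congr 1 with x
          ring
    have hT : ∑ k, T k x ^ 2 ≤ ∑ k, (2 * Q k x ^ 2 + 2 * (Q k x - T k x) ^ 2) :=
      Finset.sum_le_sum fun k _ => by nlinarith [sq_nonneg (2 * Q k x - T k x)]
    rw [Finset.sum_add_distrib, ← Finset.mul_sum, ← Finset.mul_sum] at hT
    nlinarith [hcomm x hx, sq_nonneg (P x)]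
  have hIg : 0 ≤ ∫ x in Ω, (u x ^ 2 + ∑ k, U k x ^ 2) * ρ x :=
    setIntegral_nonneg hΩo.measurableSet fun x _ => mul_nonneg (by positivity) (hρ0 x)
  nlinarith [mul_le_mul_of_nonneg_left hcommutator hA, mul_le_mul_of_nonneg_right hs hIg]

theorem carleman_divergence_first_order (hΩo : IsOpen Ω) (hΩb : Bornology.IsBounded Ω)
    (hB : ∀ i, ContDiff ℝ 2 fun x => B x i) {φ : E → ℝ} (hφ : ContDiff ℝ 2 φ) {μ : ℝ}
    (hμ : 0 < μ) (hnondeg : ∀ᵐ x ∂(volume.restrict Ω), μ ≤ |∑ i, B x i * pd φ i x|) :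
    ∃ C > (0 : ℝ), ∃ s2 > (0 : ℝ), ∀ s ≥ s2, ∀ g : E → ℝ,
      ContDiff ℝ 2 g → HasCompactSupport g → tsupport g ⊆ Ω →
        s ^ 2 * ∫ x in Ω, (g x ^ 2 + ∑ i, pd g i x ^ 2) * exp (2 * s * φ x) ≤
          C * ∫ x in Ω, (divergence (fun y i => g y * B y i) x ^ 2 +
            ∑ i, pd (divergence fun y i => g y * B y i) i x ^ 2) * exp (2 * s * φ x) := by
  obtain ⟨s0, hs0, hzero⟩ :=
    carleman_divergence_zeroth_order hΩo hΩb (fun i => (hB i).of_le one_le_two) hφ hμ hnondeg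
  obtain ⟨C, hC⟩ := exists_commutator_bound hΩb hB
  set A := 2 / μ ^ 2
  refine ⟨4 * A, by positivity, max s0 (4 * A * C + 1), lt_max_of_lt_left hs0,
    fun s hs g hg hgc hgΩ => ?_⟩
  have hsA : 4 * A * C ≤ s ^ 2 := by
    nlinarith [le_of_max_le_left hs, le_of_max_le_right hs]
  have hB1 (i : Fin n) : ContDiff ℝ 1 fun x => B x i := (hB i).of_le one_le_two
  have hpdg (k : Fin n) : ContDiff ℝ 1 (pd g k) := pd_contDiff hg le_rfl k
  exact weighted_estimate_of_commutator_bound hΩo hΩb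
    (continuous_const.mul hφ.continuous).rexp (fun x => (exp_pos _).le)
    hg.continuous (divergence_continuous fun i => (hg.of_le one_le_two).mul (hB1 i))
    (fun k => (hpdg k).continuous)
    (fun k => divergence_continuous fun i => (hpdg k).mul (hB1 i))
    (fun k => pd_continuous (divergence_contDiff (fun i => hg.mul (hB i)) le_rfl) k)
    (by positivity) hsA (hzero s (le_of_max_le_left hs) g (hg.of_le one_le_two) hgc hgΩ)
    (fun k => hzero s (le_of_max_le_left hs) (pd g k) (hpdg k) (hgc.pd k)
      ((tsupport_pd_subset g k).trans hgΩ))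
    (hC g hg)

end FirstOrder

theorem carleman_L0_first_order_general {n : ℕ}
    (Ω : Set (EuclideanSpace ℝ (Fin n))) (hΩo : IsOpen Ω)
    (hΩb : Bornology.IsBounded Ω)
    (a : EuclideanSpace ℝ (Fin n) → Fin n → Fin n → ℝ)
    (ha : ∀ i j, ContDiff ℝ 2 (fun x => a x i j))
    (u0 : EuclideanSpace ℝ (Fin n) → ℝ) (hu0 : ContDiff ℝ 3 u0)
    (d : EuclideanSpace ℝ (Fin n) → ℝ) (hd : ContDiff ℝ 2 d)
    (hdpos : ∀ x ∈ closure Ω, 0 < d x)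
    (lam : ℝ) (hlam : 0 < lam) (κ2 : ℝ) (hκ2 : 0 < κ2)
    (hnondeg : ∀ᵐ x ∂(volume.restrict Ω),
      κ2 ≤ |∑ i, (∑ j, a x i j * pd u0 j x) * pd d i x|) :
    ∃ C > (0 : ℝ), ∃ s2 > (0 : ℝ), ∀ s ≥ s2,
      ∀ g : EuclideanSpace ℝ (Fin n) → ℝ,
        ContDiff ℝ 2 g → HasCompactSupport g → tsupport g ⊆ Ω →
        s ^ 2 * ∫ x in Ω, (g x ^ 2 + ∑ i, pd g i x ^ 2)
            * Real.exp (2 * s * Real.exp (lam * d x)) ≤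
          C * ∫ x in Ω, ((L0op a u0 g x) ^ 2 + ∑ i, pd (L0op a u0 g) i x ^ 2)
              * Real.exp (2 * s * Real.exp (lam * d x)) := by
  have hB (i : Fin n) : ContDiff ℝ 2 fun x => ∑ j, a x i j * pd u0 j x :=
    ContDiff.sum fun j _ => (ha i j).mul (pd_contDiff hu0 (by norm_num) j)
  have hφnondeg : ∀ᵐ x ∂(volume.restrict Ω),
      lam * κ2 ≤ |∑ i, (∑ j, a x i j * pd u0 j x) * pd (fun y => exp (lam * d y)) i x| := by
    filter_upwards [hnondeg, ae_restrict_mem hΩo.measurableSet] with x hκx hx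
    exact le_abs_sum_mul_pd_exp_mul (B := fun x i => ∑ j, a x i j * pd u0 j x)
      (hd.differentiable two_ne_zero x) (hdpos x (subset_closure hx)).le hlam.le hκx
  exact carleman_divergence_first_order hΩo hΩb hB (contDiff_const.mul hd).exp
    (mul_pos hlam hκ2) hφnondeg

/-- First-order weighted Carleman estimate for `L₀`: with `a ∈ W^{2,∞}`,
`u₀ ∈ W^{3,∞}`, and the non-degeneracy `|a ∇u₀ · ∇d| ≥ κ₂` a.e., there exist
`C > 0`, `s₂ > 0` with
`s² ∫_Ω (g² + |∇g|²) e^{2sφ₀} ≤ C ∫_Ω (|L₀g|² + |∇(L₀g)|²) e^{2sφ₀}`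
for all `s ≥ s₂` and `g ∈ H₀²(Ω)`. -/
theorem carleman_L0_first_order {n : ℕ}
    (Ω : Set (EuclideanSpace ℝ (Fin n))) (hΩo : IsOpen Ω)
    (hΩb : Bornology.IsBounded Ω)
    (a : EuclideanSpace ℝ (Fin n) → Fin n → Fin n → ℝ)
    (ha : ∀ i j, ContDiff ℝ 2 (fun x => a x i j))
    (hasymm : ∀ x i j, a x i j = a x j i)
    (u0 : EuclideanSpace ℝ (Fin n) → ℝ) (hu0 : ContDiff ℝ 3 u0)
    (d : EuclideanSpace ℝ (Fin n) → ℝ) (hd : ContDiff ℝ 2 d)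
    (hdpos : ∀ x ∈ closure Ω, 0 < d x)
    (lam : ℝ) (hlam : 0 < lam) (κ2 : ℝ) (hκ2 : 0 < κ2)
    (hnondeg : ∀ᵐ x ∂(volume.restrict Ω),
      κ2 ≤ |∑ i, (∑ j, a x i j * pd u0 j x) * pd d i x|) :
    ∃ C > (0 : ℝ), ∃ s2 > (0 : ℝ), ∀ s ≥ s2,
      ∀ g : EuclideanSpace ℝ (Fin n) → ℝ,
        ContDiff ℝ 2 g → HasCompactSupport g → tsupport g ⊆ Ω →
        s ^ 2 * ∫ x in Ω, (g x ^ 2 + ∑ i, pd g i x ^ 2)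
            * Real.exp (2 * s * Real.exp (lam * d x)) ≤
          C * ∫ x in Ω, ((L0op a u0 g x) ^ 2 + ∑ i, pd (L0op a u0 g) i x ^ 2)
              * Real.exp (2 * s * Real.exp (lam * d x)) :=
  carleman_L0_first_order_general Ω hΩo hΩb a ha u0 hu0 d hd hdpos lam hlam κ2 hκ2 hnondeg
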